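/- Let F be a field, A ∈ F^{m×n}, v ≤ min(m,n), and i ∈ [n] with i ∉ {v} ∪ supp(A(v,·)). If i is frozen in A but i is not frozen in A⟨v;v⟩ (the matrix A with row v and column v zeroed), then the set {i} ∪ (supp(A(v,·)) \ {v}) is a proper relation of A⟨v;v⟩. -/

import Mathlib

/-- `i` is frozen in `A` if the `i`-th standard unit row vector lies in the row space
of `A`. -/
def Matrix.IsFrozen {F : Type*} [Field F] {m n : ℕ} (A : Matrix (Fin m) (Fin n) F)
    (i : Fin n) : Prop :=
  Pi.single i 1 ∈ Submodule.span F (Set.range A)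

/-- A nonempty `I ⊆ [n]` is a relation of `A` if some row combination `y ᵥ* A` has
nonempty support contained in `I`. -/
def Matrix.IsRelation {F : Type*} [Field F] {m n : ℕ} (A : Matrix (Fin m) (Fin n) F)
    (I : Set (Fin n)) : Prop :=
  ∃ y : Fin m → F, (Function.support (Matrix.vecMul y A)).Nonempty ∧
    Function.support (Matrix.vecMul y A) ⊆ I

/-- A relation `I` of `A` is a proper relation if moreover `I` minus the set of frozen
indices of `A` is again a relation of `A`. -/
def Matrix.IsProperRelation {F : Type*} [Field F] {m n : ℕ} (A : Matrix (Fin m) (Fin n) F)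
    (I : Set (Fin n)) : Prop :=
  A.IsRelation I ∧ A.IsRelation (I \ {i | A.IsFrozen i})


/-!
Write `e_i = y ᵥ* A` and `B = A⟨v;v⟩`. Zeroing row `v` removes the summand `y_v • A(v,·)` from
`y ᵥ* A`, and zeroing column `v` kills coordinate `v`; so `y ᵥ* B` equals `e_i - y_v • A(v,·)` off
`v`. It lies in the row space of `B`, is `1` at `i`, and is supported in `{i} ∪ (supp A(v,·) \ {v})`.
Subtracting its frozen coordinates (each a multiple of a unit vector in the row space of `B`) keeps
it in the row space and leaves coordinate `i` untouched, because `i` is not frozen in `B`.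
-/

namespace Matrix

theorem vecMul_updateRow_zero {R m n : Type*} [NonUnitalNonAssocRing R] [Fintype m]
    [DecidableEq m] (y : m → R) (A : Matrix m n R) (r : m) :
    y ᵥ* A.updateRow r 0 = y ᵥ* A - y r • A r := by
  rw [show A.updateRow r 0 = A - updateRow 0 r (A r) by ext j k; by_cases hj : j = r <;> simp [hj],
    vecMul_sub]
  congr 1
  ext k
  simp [vecMul, dotProduct, updateRow_apply]

variable {F : Type*} [Field F] {m n : ℕ}

theorem mem_span_range_iff_exists_vecMul {A : Matrix (Fin m) (Fin n) F} {w : Fin n → F} :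
    w ∈ Submodule.span F (Set.range A) ↔ ∃ y, y ᵥ* A = w := by
  rw [show Set.range A = Set.range A.row from rfl, ← range_vecMulLinear]
  rfl

theorem vecMul_mem_span_range (y : Fin m → F) (A : Matrix (Fin m) (Fin n) F) :
    y ᵥ* A ∈ Submodule.span F (Set.range A) :=
  mem_span_range_iff_exists_vecMul.2 ⟨y, rfl⟩

theorem isFrozen_iff_exists_vecMul {A : Matrix (Fin m) (Fin n) F} {i : Fin n} :
    A.IsFrozen i ↔ ∃ y, y ᵥ* A = Pi.single i 1 :=
  mem_span_range_iff_exists_vecMul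

theorem isRelation_of_mem_span {A : Matrix (Fin m) (Fin n) F} {I : Set (Fin n)}
    {w : Fin n → F} (hw : w ∈ Submodule.span F (Set.range A)) (hne : w.support.Nonempty)
    (hwI : w.support ⊆ I) : A.IsRelation I := by
  obtain ⟨y, rfl⟩ := mem_span_range_iff_exists_vecMul.1 hw
  exact ⟨y, hne, hwI⟩

theorem isRelation_diff_setOf_isFrozen {A : Matrix (Fin m) (Fin n) F} {I : Set (Fin n)}
    {w : Fin n → F} (hw : w ∈ Submodule.span F (Set.range A)) (hwI : w.support ⊆ I)
    {i : Fin n} (hwi : w i ≠ 0) (hi : ¬ A.IsFrozen i) :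
    A.IsRelation (I \ {k | A.IsFrozen k}) := by
  classical
  set w' := w - ∑ k ∈ Finset.univ.filter A.IsFrozen, Pi.single k (w k)
  have hw' : ∀ k, w' k = if A.IsFrozen k then 0 else w k := by
    intro k
    by_cases hk : A.IsFrozen k <;> simp [w', Finset.sum_pi_single, hk]
  refine isRelation_of_mem_span (w := w')
    (Submodule.sub_mem _ hw (Submodule.sum_mem _ fun k hk => ?_)) ⟨i, by simp [hw', hi, hwi]⟩ ?_
  · simpa [← Pi.single_smul'] using Submodule.smul_mem _ (w k) (Finset.mem_filter.1 hk).2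
  · intro k hk
    rw [Function.mem_support, hw'] at hk
    split_ifs at hk with hfk
    · exact absurd rfl hk
    · exact ⟨hwI hk, hfk⟩

end Matrix

open Matrix in
/-- If `i ∉ {v} ∪ supp(A(v,·))` is frozen in `A` but becomes unfrozen after zeroing row
`v` and column `v`, then `{i} ∪ (supp(A(v,·)) \ {v})` is a proper relation of the matrix
with row `v` and column `v` zeroed. -/
theorem stmt_9 {F : Type*} [Field F] {m n : ℕ} (A : Matrix (Fin m) (Fin n) F)
    (v : ℕ) (hvm : v < m) (hvn : v < n) (i : Fin n)
    (hiv : i ≠ ⟨v, hvn⟩) (hAvi : A ⟨v, hvm⟩ i = 0)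
    (hfrozen : A.IsFrozen i)
    (hnot : ¬ ((A.updateRow ⟨v, hvm⟩ 0).updateCol ⟨v, hvn⟩ 0).IsFrozen i) :
    ((A.updateRow ⟨v, hvm⟩ 0).updateCol ⟨v, hvn⟩ 0).IsProperRelation
      (insert i ({k : Fin n | A ⟨v, hvm⟩ k ≠ 0} \ {(⟨v, hvn⟩ : Fin n)})) := by
  set B := (A.updateRow ⟨v, hvm⟩ 0).updateCol ⟨v, hvn⟩ 0
  obtain ⟨y, hy⟩ := isFrozen_iff_exists_vecMul.1 hfrozen
  have hyB : y ᵥ* B = Function.update (Pi.single i 1 - y ⟨v, hvm⟩ • A ⟨v, hvm⟩) ⟨v, hvn⟩ 0 := by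
    rw [vecMul_updateCol, vecMul_updateRow_zero, hy, dotProduct_zero]
  have hyBi : (y ᵥ* B) i = 1 := by simp [hyB, hiv, hAvi]
  have hsupp : (y ᵥ* B).support ⊆ insert i ({k | A ⟨v, hvm⟩ k ≠ 0} \ {⟨v, hvn⟩}) := by
    intro k hk
    rcases eq_or_ne k i with rfl | hki
    · exact Set.mem_insert _ _
    · rcases eq_or_ne k ⟨v, hvn⟩ with rfl | hkv
      · simp [hyB] at hk
      · refine Set.mem_insert_of_mem _ ⟨fun hA => hk ?_, hkv⟩
        simp [hyB, hkv, hki, hA]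
  exact ⟨isRelation_of_mem_span (vecMul_mem_span_range y B) ⟨i, by simp [hyBi]⟩ hsupp,
    isRelation_diff_setOf_isFrozen (vecMul_mem_span_range y B) hsupp (by simp [hyBi]) hnot⟩
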